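/- Let G be a finite outerplanar simple graph with maximum degree Δ ≥ 6. Then every clique of G² with Δ + 1 vertices is the closed neighborhood of some vertex of G: if S is a set of Δ + 1 vertices that are pairwise adjacent in G², then there is a vertex v of G with degree Δ such that S = {v} ∪ N_G(v). -/

import Mathlib

open SimpleGraph

/-- The square `G²` of a simple graph `G`: two distinct vertices are adjacent iff
they are adjacent in `G` or have a common neighbor in `G`. -/
def SimpleGraph.square {V : Type*} (G : SimpleGraph V) : SimpleGraph V where
  Adj u v := u ≠ v ∧ (G.Adj u v ∨ ∃ w, G.Adj u w ∧ G.Adj w v)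
  symm := ⟨by
    rintro u v ⟨hne, h | ⟨w, h1, h2⟩⟩
    · exact ⟨hne.symm, Or.inl h.symm⟩
    · exact ⟨hne.symm, Or.inr ⟨w, h2.symm, h1.symm⟩⟩⟩
  loopless := ⟨fun u h => h.1 rfl⟩

/-- A finite simple graph is outerplanar iff it has a one-page book embedding:
a linear order (here realized by an injection into `ℕ`) on its vertices such that
no two edges "cross", i.e. there are no vertices `a < c < b < d` with both
`{a,b}` and `{c,d}` edges. -/
def SimpleGraph.IsOuterplanar {V : Type*} (G : SimpleGraph V) : Prop :=
  ∃ f : V → ℕ, Function.Injective f ∧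
    ∀ a b c d : V, G.Adj a b → G.Adj c d →
      ¬(f a < f c ∧ f c < f b ∧ f b < f d)

/-- The degree of a vertex, as the cardinality of its neighbor set. -/
noncomputable def SimpleGraph.deg {V : Type*} (G : SimpleGraph V) (v : V) : ℕ :=
  (G.neighborSet v).ncard

/-- The maximum degree `Δ` of a finite graph. -/
noncomputable def SimpleGraph.maxDeg {V : Type*} [Fintype V] (G : SimpleGraph V) : ℕ :=
  Finset.univ.sup fun v => G.deg v

/-- The degree of `v` inside the subgraph of `G` induced by the vertex set `s`. -/
noncomputable def SimpleGraph.degIn {V : Type*} (G : SimpleGraph V) (s : Finset V) (v : V) : ℕ :=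
  {u | u ∈ s ∧ G.Adj v u}.ncard

/-- The inductiveness (degeneracy) of a finite graph: the maximum over all nonempty
induced subgraphs of the minimum degree of the induced subgraph. -/
noncomputable def SimpleGraph.inductiveness {V : Type*} [Fintype V]
    (G : SimpleGraph V) : ℕ :=
  Finset.univ.powerset.sup fun s =>
    if h : s.Nonempty then s.inf' h (G.degIn s) else 0

/-- A graph is chordal if every cycle of length at least 4 has a chord: two
vertices of the cycle, adjacent in the graph, whose joining edge is not an edge
of the cycle (i.e. they are nonconsecutive on the cycle). -/
def SimpleGraph.IsChordal {V : Type*} (G : SimpleGraph V) : Prop :=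
  ∀ ⦃v : V⦄ (w : G.Walk v v), w.IsCycle → 4 ≤ w.length →
    ∃ a b : V, a ∈ w.support ∧ b ∈ w.support ∧ G.Adj a b ∧ s(a, b) ∉ w.edges

/-- A finite graph is biconnected if it has at least 3 vertices, is connected,
and deleting any single vertex leaves it connected. -/
def SimpleGraph.Biconnected {V : Type*} [Fintype V] (G : SimpleGraph V) : Prop :=
  3 ≤ Fintype.card V ∧ G.Connected ∧
    ∀ v : V, ((G.induce {u | u ≠ v}).Connected)

/-- `G` is `k`-choosable: for every assignment of lists of exactly `k` colors to
the vertices there is a proper coloring choosing each vertex's color from its list. -/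
def SimpleGraph.Choosable {V : Type*} (G : SimpleGraph V) (k : ℕ) : Prop :=
  ∀ L : V → Finset ℕ, (∀ v, (L v).card = k) →
    ∃ c : V → ℕ, (∀ v, c v ∈ L v) ∧ ∀ u v, G.Adj u v → c u ≠ c v

/-- `F₄`: the 6-vertex graph obtained from the triangle `0 1 2` by adding, for each
edge of the triangle, a new vertex (`3 = y₀₁`, `4 = y₁₂`, `5 = y₀₂`) adjacent to
exactly the two endpoints of that edge. -/
def F4 : SimpleGraph (Fin 6) :=
  SimpleGraph.fromEdgeSet
    {s(0, 1), s(1, 2), s(0, 2), s(3, 0), s(3, 1), s(4, 1), s(4, 2), s(5, 0), s(5, 2)}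

/-- `F₆`: the 12-vertex graph obtained from `F₄` by adding, for each of the six edges
`xᵢyᵢⱼ` between a triangle vertex and an added vertex, a new vertex adjacent to
exactly the two endpoints of that edge (vertices `6,…,11`). -/
def F6 : SimpleGraph (Fin 12) :=
  SimpleGraph.fromEdgeSet
    {s(0, 1), s(1, 2), s(0, 2), s(3, 0), s(3, 1), s(4, 1), s(4, 2), s(5, 0), s(5, 2),
     s(6, 0), s(6, 3), s(7, 1), s(7, 3), s(8, 1), s(8, 4), s(9, 2), s(9, 4),
     s(10, 0), s(10, 5), s(11, 2), s(11, 5)}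

/-- The rigid ladder `RL n`.  For even `n = 2k` it has vertices `u₁,…,u_k,v₁,…,v_k`
and edges `uᵢvᵢ, uᵢuᵢ₊₁, uᵢvᵢ₊₁, vᵢvᵢ₊₁` (for `1 ≤ i ≤ k-1`) together with `u_k v_k`;
for odd `n` it is `RL (n+1)` with the vertex `u_{(n+1)/2}` deleted.  We use the zigzag
labelling `vᵢ ↦ 2i - 2`, `uᵢ ↦ 2i - 1` (under which deleting `u_{(n+1)/2} = n` from
`RL (n+1)` leaves exactly the labels `0,…,n-1`); under this labelling two vertices are
adjacent iff their labels differ by exactly 1 or 2. -/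
def rigidLadder (n : ℕ) : SimpleGraph (Fin n) where
  Adj a b := a ≠ b ∧ Nat.dist a.val b.val ≤ 2
  symm := ⟨by
    rintro a b ⟨h1, h2⟩
    exact ⟨h1.symm, by rwa [Nat.dist_comm]⟩⟩
  loopless := ⟨fun a h => h.1 rfl⟩

/-!
Lay the vertices out along the spine of a one-page book embedding and let `m` be the median of
`S`, with three vertices of `S` on each side. If no edge passes over `m`, every path of length
two between the two sides runs through `m`, so `m` is adjacent to all of `S`. Otherwise let `pq`
be the innermost edge over `m`: paths of length two leave the intervals `(p, m)` and `(m, q)`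
only through `p`, `m` or `q`, and leave `[p, q]` only through `p` or `q`. As two vertices
between `a` and `b` that are both adjacent to `a` and `b` would give crossing edges, these
bottlenecks leave room for few vertices of `S` per region, and a case analysis on which of
`(p, m)`, `(m, q)` meet `S` shows that one of `m`, `p`, `q` is adjacent to the rest of `S`. For such
a hub `h`, `S ⊆ N[h]` and `|S| = Δ + 1 ≥ deg h + 1` force `S = N[h]` and `deg h = Δ`.
-/

open Finset OrderDual

section

variable {V α : Type*} [LinearOrder α] {G : SimpleGraph V} {f : V → α}

structure IsBookEmbedding (G : SimpleGraph V) (f : V → α) : Prop where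
  injective : Function.Injective f
  not_cross : ∀ ⦃a b c d : V⦄, G.Adj a b → G.Adj c d →
    f a < f c → f c < f b → f b < f d → False

theorem position_cases (hf : Function.Injective f) (p m q s : V) :
    f s < f p ∨ s = p ∨ (f p < f s ∧ f s < f m) ∨ s = m ∨ (f m < f s ∧ f s < f q) ∨
      s = q ∨ f q < f s := by
  rcases lt_trichotomy (f s) (f p) with h | h | h
  · exact Or.inl h
  · exact Or.inr <| Or.inl <| hf h
  rcases lt_trichotomy (f s) (f m) with h' | h' | h'
  · exact Or.inr <| Or.inr <| Or.inl ⟨h, h'⟩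
  · exact Or.inr <| Or.inr <| Or.inr <| Or.inl <| hf h'
  rcases lt_trichotomy (f s) (f q) with h'' | h'' | h''
  · exact Or.inr <| Or.inr <| Or.inr <| Or.inr <| Or.inl ⟨h', h''⟩
  · exact Or.inr <| Or.inr <| Or.inr <| Or.inr <| Or.inr <| Or.inl <| hf h''
  · exact Or.inr <| Or.inr <| Or.inr <| Or.inr <| Or.inr <| Or.inr h''

theorem exists_median (hf : Function.Injective f) (k : ℕ) (S : Finset V) (hk : 2 * k + 1 ≤ #S) :
    ∃ m ∈ S, k ≤ #{s ∈ S | f s < f m} ∧ k ≤ #{s ∈ S | f m < f s} := by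
  classical
  induction k generalizing S with
  | zero =>
    obtain ⟨m, hm⟩ := card_pos.1 (by omega : 0 < #S)
    exact ⟨m, hm, Nat.zero_le _, Nat.zero_le _⟩
  | succ k ih =>
    -- peel off the least and the greatest element of `S`
    obtain ⟨a, ha, hmin⟩ := S.exists_min_image f (card_pos.1 (by omega))
    have ha' := card_erase_add_one ha
    obtain ⟨b, hb, hmax⟩ := (S.erase a).exists_max_image f (card_pos.1 (by omega))
    have hb' := card_erase_add_one hb
    obtain ⟨m, hm, hlt, hgt⟩ := ih ((S.erase a).erase b) (by omega)
    obtain ⟨hmb, hm⟩ := mem_erase.1 hm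
    obtain ⟨hma, hmS⟩ := mem_erase.1 hm
    have ham : f a < f m := (hmin m hmS).lt_of_ne (hf.ne hma.symm)
    have hmb : f m < f b := (hmax m hm).lt_of_ne (hf.ne hmb)
    refine ⟨m, hmS, ?_, ?_⟩
    · have hsub : {s ∈ (S.erase a).erase b | f s < f m} ⊆ {s ∈ S | f s < f m}.erase a := by
        intro s; simp only [mem_filter, mem_erase]; tauto
      have := card_erase_add_one (mem_filter.2 ⟨ha, ham⟩ : a ∈ {s ∈ S | f s < f m})
      have := card_le_card hsub
      omega
    · have hsub : {s ∈ (S.erase a).erase b | f m < f s} ⊆ {s ∈ S | f m < f s}.erase b := by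
        intro s; simp only [mem_filter, mem_erase]; tauto
      have := card_erase_add_one
        (mem_filter.2 ⟨mem_of_mem_erase hb, hmb⟩ : b ∈ {s ∈ S | f m < f s})
      have := card_le_card hsub
      omega

theorem card_filter_gt_le (hf : Function.Injective f) (S : Finset V) (m q : V) :
    #{s ∈ S | f m < f s} ≤
      #{s ∈ S | f m < f s ∧ f s < f q} + #{s ∈ S | f q < f s} + 1 := by
  classical
  calc #{s ∈ S | f m < f s}
      ≤ #({s ∈ S | f m < f s ∧ f s < f q} ∪ {s ∈ S | f q < f s} ∪ {q}) := by
        refine card_le_card fun s hs => ?_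
        simp only [mem_filter, mem_union, mem_singleton] at hs ⊢
        rcases lt_trichotomy (f s) (f q) with h | h | h
        · exact Or.inl <| Or.inl ⟨hs.1, hs.2, h⟩
        · exact Or.inr <| hf h
        · exact Or.inl <| Or.inr ⟨hs.1, h⟩
    _ ≤ _ := (card_union_le _ _).trans <| add_le_add (card_union_le _ _) (card_singleton q).le

theorem exists_two_gt_of_none_between (hf : Function.Injective f) {S : Finset V} {m q : V}
    (hR : ∀ s ∈ S, ¬(f m < f s ∧ f s < f q)) (hright : 3 ≤ #{s ∈ S | f m < f s}) :
    ∃ o₁ ∈ S, ∃ o₂ ∈ S, f q < f o₁ ∧ f o₁ < f o₂ := by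
  have hR0 : #{s ∈ S | f m < f s ∧ f s < f q} = 0 :=
    card_eq_zero.2 <| filter_eq_empty_iff.2 hR
  have := card_filter_gt_le hf S m q
  obtain ⟨a, ha, b, hb, hab⟩ := one_lt_card.1 (by omega : 1 < #{s ∈ S | f q < f s})
  obtain ⟨ha, hqa⟩ := mem_filter.1 ha
  obtain ⟨hb, hqb⟩ := mem_filter.1 hb
  rcases (hf.ne hab).lt_or_gt with h | h
  · exact ⟨a, ha, b, hb, hqa, h⟩
  · exact ⟨b, hb, a, ha, hqb, h⟩

theorem forall_adj_of_not_exists_adj_over (hf : Function.Injective f) {S : Finset V} {m : V}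
    (hS : G.square.IsClique (S : Set V))
    (hover : ¬∃ a b, G.Adj a b ∧ f a < f m ∧ f m < f b)
    (hl : ∃ x ∈ S, f x < f m) (hr : ∃ y ∈ S, f m < f y) :
    ∀ s ∈ S, s ≠ m → G.Adj m s := by
  have key : ∀ {x y}, x ∈ S → y ∈ S → f x < f m → f m < f y →
      G.Adj x m ∧ G.Adj m y := by
    intro x y hx hy hxm hmy
    rcases (hS hx hy (hf.ne_iff.1 (by order))).2 with hxy | ⟨w, hxw, hwy⟩
    · exact absurd ⟨x, y, hxy, hxm, hmy⟩ hover
    rcases lt_trichotomy (f w) (f m) with hw | hw | hw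
    · exact absurd ⟨w, y, hwy, hw, hmy⟩ hover
    · exact hf hw ▸ ⟨hxw, hwy⟩
    · exact absurd ⟨x, w, hxw, hxm, hw⟩ hover
  intro s hs hsm
  rcases (hf.ne hsm).lt_or_gt with h | h
  · obtain ⟨y, hy, hmy⟩ := hr
    exact (key hs hy h hmy).1.symm
  · obtain ⟨x, hx, hxm⟩ := hl
    exact (key hx hs hxm h).2

namespace IsBookEmbedding

variable {a b c d p q x y z : V}

-- Reading the spine backwards swaps the roles of left and right (and of `p` and `q` below),
-- so each one-sided lemma also yields its mirror image.
theorem dual (hf : IsBookEmbedding G f) : IsBookEmbedding G (toDual ∘ f) :=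
  ⟨toDual.injective.comp hf.injective, fun _ _ _ _ hab hcd h₁ h₂ h₃ =>
    hf.not_cross hcd.symm hab.symm h₃ h₂ h₁⟩

theorem mem_Icc_of_adj (hf : IsBookEmbedding G f) (hpq : G.Adj p q) (hpx : f p < f x)
    (hxq : f x < f q) (hxy : G.Adj x y) : f y ∈ Set.Icc (f p) (f q) :=
  ⟨le_of_not_gt fun h => hf.not_cross hxy.symm hpq h hpx hxq,
    le_of_not_gt fun h => hf.not_cross hpq hxy hpx hxq h⟩

theorem square_adj_across (hf : IsBookEmbedding G f) (hpq : G.Adj p q) (hpx : f p < f x)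
    (hxq : f x < f q) (hy : f y < f p ∨ f q < f y) (hxy : G.square.Adj x y) :
    (G.Adj x p ∧ G.Adj p y) ∨ (G.Adj x q ∧ G.Adj q y) := by
  have hy' : f y ∉ Set.Icc (f p) (f q) := by
    rintro ⟨h₁, h₂⟩
    rcases hy with h | h <;> order
  rcases hxy.2 with hxy | ⟨w, hxw, hwy⟩
  · exact absurd (hf.mem_Icc_of_adj hpq hpx hxq hxy) hy'
  obtain ⟨hpw, hwq⟩ := hf.mem_Icc_of_adj hpq hpx hxq hxw
  rcases hpw.eq_or_lt with hpw | hpw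
  · obtain rfl := hf.injective hpw
    exact Or.inl ⟨hxw, hwy⟩
  rcases hwq.eq_or_lt with hwq | hwq
  · obtain rfl := hf.injective hwq
    exact Or.inr ⟨hxw, hwy⟩
  · exact absurd (hf.mem_Icc_of_adj hpq hpw hwq hwy) hy'

theorem not_square_adj_of_separated (hf : IsBookEmbedding G f) (hab : G.Adj a b)
    (hcd : G.Adj c d) (hay : f a < f y) (hyb : f y < f b) (hbc : f b ≤ f c) (hcz : f c < f z)
    (hzd : f z < f d) (hyc : ¬G.Adj y c) : ¬G.square.Adj y z := by
  rintro ⟨-, hyz | ⟨w, hyw, hwz⟩⟩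
  · exact hf.not_cross hab hyz hay hyb (hbc.trans_lt hcz)
  rcases lt_trichotomy (f w) (f c) with h | h | h
  · exact hf.not_cross hwz hcd h hcz hzd
  · exact hyc (hf.injective h ▸ hyw)
  · exact hf.not_cross hab hyw hay hyb (hbc.trans_lt h)

theorem card_le_one_of_forall_adj (hf : IsBookEmbedding G f) {T : Finset V}
    (hT : ∀ y ∈ T, f a < f y ∧ f y < f b ∧ G.Adj a y ∧ G.Adj y b) : #T ≤ 1 := by
  refine card_le_one.2 fun y hy z hz => by_contra fun hne => ?_
  rcases (hf.injective.ne hne).lt_or_gt with h | h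
  · exact hf.not_cross (hT z hz).2.2.1 (hT y hy).2.2.2 (hT y hy).1 h (hT z hz).2.1
  · exact hf.not_cross (hT y hy).2.2.1 (hT z hz).2.2.2 (hT z hz).1 h (hT y hy).2.1

theorem false_of_left_of_left (hf : IsBookEmbedding G f) {S : Finset V}
    (hS : G.square.IsClique (S : Set V)) {r₁ r₂ : V} (hxq : G.Adj x q) (hyp : G.Adj y p)
    (hyq : ¬G.Adj y q) (hfx : f x < f p) (hfy : f y < f p) (hpq : f p < f q) (hy : y ∈ S)
    (hr₁ : r₁ ∈ S) (hqr : f q < f r₁) (hr : f r₁ < f r₂) (hr₂ : G.Adj p r₂ ∨ G.Adj q r₂) :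
    False := by
  rcases lt_trichotomy (f x) (f y) with h | h | h
  · rcases hr₂ with hr₂ | hr₂
    · exact hf.not_cross hxq hr₂ hfx hpq (hqr.trans hr)
    · exact hf.not_square_adj_of_separated hxq hr₂ h (hfy.trans hpq) le_rfl hqr hr hyq
        (hS hy hr₁ (hf.injective.ne_iff.1 (by order)))
  · exact hyq (hf.injective h ▸ hxq)
  · exact hf.not_cross hyp hxq h hfx hpq

theorem false_of_right_of_left (hf : IsBookEmbedding G f) {S : Finset V}
    (hS : G.square.IsClique (S : Set V)) {l₁ l₂ r₁ r₂ : V} (hpq : f p < f q)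
    (hO : ∀ o ∈ S, (f o < f p ∨ f q < f o) → G.Adj p o ∨ G.Adj q o)
    (hl₁ : l₁ ∈ S) (hl₂ : l₂ ∈ S) (hl : f l₁ < f l₂) (hl₂p : f l₂ < f p)
    (hr₁ : r₁ ∈ S) (hr₂ : r₂ ∈ S) (hqr₁ : f q < f r₁) (hr : f r₁ < f r₂)
    (hx : x ∈ S) (hqx : G.Adj q x) (hpx : ¬G.Adj p x) (hxq : f q < f x)
    (hy : y ∈ S) (hpy : G.Adj p y) (hqy : ¬G.Adj q y) (hyp : f y < f p) : False := by
  by_cases hl' : ∃ l ∈ S, f l < f p ∧ G.Adj q l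
  · obtain ⟨l, -, hlp, hql⟩ := hl'
    exact hf.false_of_left_of_left hS hql.symm hpy.symm (fun h => hqy h.symm) hlp hyp hpq hy hr₁
      hqr₁ hr (hO r₂ hr₂ (Or.inr (hqr₁.trans hr)))
  by_cases hr' : ∃ r ∈ S, f q < f r ∧ G.Adj p r
  · obtain ⟨r, -, hqr, hpr⟩ := hr'
    exact hf.dual.false_of_left_of_left hS hpr.symm hqx.symm (fun h => hpx h.symm) hqr hxq hpq hx
      hl₂ hl₂p hl (hO l₁ hl₁ (Or.inl (hl.trans hl₂p))).symm
  push Not at hl' hr'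
  have hl₁p := hl.trans hl₂p
  have hpl₁ : G.Adj l₁ p := ((hO l₁ hl₁ (Or.inl hl₁p)).resolve_right (hl' l₁ hl₁ hl₁p)).symm
  have hqr₂ : G.Adj q r₂ :=
    (hO r₂ hr₂ (Or.inr (hqr₁.trans hr))).resolve_left (hr' r₂ hr₂ (hqr₁.trans hr))
  exact hf.not_square_adj_of_separated hpl₁ hqr₂ hl hl₂p hpq.le hqr₁ hr
    (fun h => hl' l₂ hl₂ hl₂p h.symm) (hS hl₂ hr₁ (hf.injective.ne_iff.1 (by order)))

theorem forall_adj_or_forall_adj (hf : IsBookEmbedding G f) {S : Finset V}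
    (hS : G.square.IsClique (S : Set V)) {l₁ l₂ r₁ r₂ : V} (hpq : f p < f q)
    (hO : ∀ o ∈ S, (f o < f p ∨ f q < f o) → G.Adj p o ∨ G.Adj q o)
    (hl₁ : l₁ ∈ S) (hl₂ : l₂ ∈ S) (hl : f l₁ < f l₂) (hl₂p : f l₂ < f p)
    (hr₁ : r₁ ∈ S) (hr₂ : r₂ ∈ S) (hqr₁ : f q < f r₁) (hr : f r₁ < f r₂) :
    (∀ o ∈ S, (f o < f p ∨ f q < f o) → G.Adj p o) ∨
      (∀ o ∈ S, (f o < f p ∨ f q < f o) → G.Adj q o) := by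
  by_contra! h
  obtain ⟨⟨x, hx, hxo, hpx⟩, ⟨y, hy, hyo, hqy⟩⟩ := h
  have hqx := (hO x hx hxo).resolve_left hpx
  have hpy := (hO y hy hyo).resolve_right hqy
  rcases hxo with hxp | hqx' <;> rcases hyo with hyp | hqy'
  · exact hf.false_of_left_of_left hS hqx.symm hpy.symm (fun h => hqy h.symm) hxp hyp hpq hy hr₁
      hqr₁ hr (hO r₂ hr₂ (Or.inr (hqr₁.trans hr)))
  · exact hf.not_cross hqx.symm hpy hxp hpq hqy'
  · exact hf.false_of_right_of_left hS hpq hO hl₁ hl₂ hl hl₂p hr₁ hr₂ hqr₁ hr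
      hx hqx hpx hqx' hy hpy hqy hyp
  · exact hf.dual.false_of_left_of_left hS hpy.symm hqx.symm (fun h => hpx h.symm) hqy' hqx' hpq hx
      hl₂ hl₂p hl (hO l₁ hl₁ (Or.inl (hl.trans hl₂p))).symm

end IsBookEmbedding

structure IsInnermostEdgeOver (G : SimpleGraph V) (f : V → α) (p q m : V) : Prop where
  adj : G.Adj p q
  lt_mid : f p < f m
  mid_lt : f m < f q
  le_of_adj : ∀ ⦃a b⦄, G.Adj a b → f a < f m → f m < f b → f a ≤ f p ∧ f q ≤ f b

theorem IsBookEmbedding.exists_isInnermostEdgeOver [Finite V] (hf : IsBookEmbedding G f)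
    {m : V} (h : ∃ a b, G.Adj a b ∧ f a < f m ∧ f m < f b) :
    ∃ p q, IsInnermostEdgeOver G f p q m := by
  obtain ⟨a, b, hab, ham, hmb⟩ := h
  -- `p` is the last left end of an edge over `m`, and `q` the first right end of one at `p`
  obtain ⟨p, ⟨b', hpb', hpm, hmb'⟩, hp⟩ :=
    Set.exists_max_image {a | ∃ b, G.Adj a b ∧ f a < f m ∧ f m < f b} f (Set.toFinite _)
      ⟨a, b, hab, ham, hmb⟩
  obtain ⟨q, ⟨hpq, hmq⟩, hq⟩ :=
    Set.exists_min_image {b | G.Adj p b ∧ f m < f b} f (Set.toFinite _) ⟨b', hpb', hmb'⟩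
  refine ⟨p, q, hpq, hpm, hmq, fun a b hab ham hmb => ?_⟩
  have hap : f a ≤ f p := hp a ⟨b, hab, ham, hmb⟩
  refine ⟨hap, le_of_not_gt fun hbq => ?_⟩
  rcases hap.lt_or_eq with hap | hap
  · exact hf.not_cross hab hpq hap (hpm.trans hmb) hbq
  · obtain rfl := hf.injective hap
    exact (hq b ⟨hab, hmb⟩).not_gt hbq

namespace IsInnermostEdgeOver

variable {p q m x y o : V} {S : Finset V}

theorem lt (hI : IsInnermostEdgeOver G f p q m) : f p < f q := hI.lt_mid.trans hI.mid_lt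

theorem dual (hI : IsInnermostEdgeOver G f p q m) : IsInnermostEdgeOver G (toDual ∘ f) q p m :=
  ⟨hI.adj.symm, hI.mid_lt, hI.lt_mid,
    fun _ _ hab h₁ h₂ => (hI.le_of_adj hab.symm h₂ h₁).symm⟩

theorem mem_Icc_of_adj_of_left (hI : IsInnermostEdgeOver G f p q m) (hf : IsBookEmbedding G f)
    (hpx : f p < f x) (hxm : f x < f m) (hxy : G.Adj x y) : f y ∈ Set.Icc (f p) (f m) :=
  ⟨(hf.mem_Icc_of_adj hI.adj hpx (hxm.trans hI.mid_lt) hxy).1,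
    le_of_not_gt fun h => (hI.le_of_adj hxy hxm h).1.not_gt hpx⟩

theorem mem_Icc_of_adj_of_right (hI : IsInnermostEdgeOver G f p q m) (hf : IsBookEmbedding G f)
    (hmy : f m < f y) (hyq : f y < f q) (hyx : G.Adj y x) : f x ∈ Set.Icc (f m) (f q) :=
  (hI.dual.mem_Icc_of_adj_of_left hf.dual hyq hmy hyx).symm

theorem adj_of_left_of_right (hI : IsInnermostEdgeOver G f p q m) (hf : IsBookEmbedding G f)
    (hpx : f p < f x) (hxm : f x < f m) (hmy : f m < f y) (hyq : f y < f q)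
    (hxy : G.square.Adj x y) : G.Adj x m ∧ G.Adj m y := by
  rcases hxy.2 with hxy | ⟨w, hxw, hwy⟩
  · exact absurd (hI.mem_Icc_of_adj_of_left hf hpx hxm hxy).2 hmy.not_ge
  obtain rfl := hf.injective <| le_antisymm (hI.mem_Icc_of_adj_of_left hf hpx hxm hxw).2
    (hI.mem_Icc_of_adj_of_right hf hmy hyq hwy.symm).1
  exact ⟨hxw, hwy⟩

theorem adj_of_left_of_outside (hI : IsInnermostEdgeOver G f p q m) (hf : IsBookEmbedding G f)
    (hpx : f p < f x) (hxm : f x < f m) (ho : f o < f p ∨ f q < f o) (hxo : G.square.Adj x o) :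
    G.Adj x p ∧ G.Adj p o :=
  (hf.square_adj_across hI.adj hpx (hxm.trans hI.mid_lt) ho hxo).resolve_right fun h =>
    (hI.mem_Icc_of_adj_of_left hf hpx hxm h.1).2.not_gt hI.mid_lt

theorem adj_of_right_of_outside (hI : IsInnermostEdgeOver G f p q m) (hf : IsBookEmbedding G f)
    (hmy : f m < f y) (hyq : f y < f q) (ho : f o < f p ∨ f q < f o) (hyo : G.square.Adj y o) :
    G.Adj y q ∧ G.Adj q o :=
  hI.dual.adj_of_left_of_outside hf.dual hyq hmy ho.symm hyo

theorem adj_right_end_of_not_adj (hI : IsInnermostEdgeOver G f p q m) (hf : IsBookEmbedding G f)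
    (hpm : ¬G.Adj p m) (hmy : f m < f y) (hyq : f y < f q) (hpy : G.square.Adj p y) :
    G.Adj y q := by
  rcases hpy.2 with hpy | ⟨w, hpw, hwy⟩
  · exact absurd (hI.mem_Icc_of_adj_of_right hf hmy hyq hpy.symm).1 hI.lt_mid.not_ge
  obtain ⟨hmw, hwq⟩ := hI.mem_Icc_of_adj_of_right hf hmy hyq hwy.symm
  rcases hmw.eq_or_lt with hmw | hmw
  · obtain rfl := hf.injective hmw
    exact absurd hpw hpm
  rcases hwq.eq_or_lt with hwq | hwq
  · obtain rfl := hf.injective hwq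
    exact hwy.symm
  · exact absurd (hI.mem_Icc_of_adj_of_right hf hmw hwq hpw.symm).1 hI.lt_mid.not_ge

theorem forall_adj_left_end_of_regions (hI : IsInnermostEdgeOver G f p q m)
    (hf : Function.Injective f) (hL : ∀ s ∈ S, f p < f s → f s < f m → G.Adj p s)
    (hR : ∀ s ∈ S, ¬(f m < f s ∧ f s < f q))
    (hO : ∀ o ∈ S, (f o < f p ∨ f q < f o) → G.Adj p o) (hpm : G.Adj p m) :
    ∀ s ∈ S, s ≠ p → G.Adj p s := by
  intro s hs hsp
  rcases position_cases hf p m q s with h | rfl | h | rfl | h | rfl | h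
  · exact hO s hs (Or.inl h)
  · exact absurd rfl hsp
  · exact hL s hs h.1 h.2
  · exact hpm
  · exact absurd h (hR s hs)
  · exact hI.adj
  · exact hO s hs (Or.inr h)

theorem left_end_le (hI : IsInnermostEdgeOver G f p q m) (hf : IsBookEmbedding G f)
    (hS : G.square.IsClique (S : Set V)) (hx : x ∈ S) (hpx : f p < f x) (hxm : f x < f m)
    (hy : y ∈ S) (hmy : f m < f y) (hyq : f y < f q) (hright : 3 ≤ #{s ∈ S | f m < f s})
    (ho : o ∈ S) : f p ≤ f o := by
  by_contra! hop
  -- then `(m, q) ∩ S` consists of common neighbours of `m` and `q`, so some `o' ∈ S` lies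
  -- beyond `q`, and the edges `oq` and `po'` cross
  have hpm := hI.lt_mid
  have hone : #{s ∈ S | f m < f s ∧ f s < f q} ≤ 1 :=
    hf.card_le_one_of_forall_adj fun s hs => by
      obtain ⟨hs, hms, hsq⟩ := mem_filter.1 hs
      exact ⟨hms, hsq,
        (hI.adj_of_left_of_right hf hpx hxm hms hsq
          (hS hx hs (hf.injective.ne_iff.1 (by order)))).2,
        (hI.adj_of_right_of_outside hf hms hsq (Or.inl hop)
          (hS hs ho (hf.injective.ne_iff.1 (by order)))).1⟩
  have := card_filter_gt_le hf.injective S m q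
  obtain ⟨o', ho', hqo'⟩ :=
    filter_nonempty_iff.1 (card_pos.1 (by omega : 0 < #{s ∈ S | f q < f s}))
  exact hf.not_cross
    (hI.adj_of_right_of_outside hf hmy hyq (Or.inl hop)
      (hS hy ho (hf.injective.ne_iff.1 (by order)))).2.symm
    (hI.adj_of_left_of_outside hf hpx hxm (Or.inr hqo')
      (hS hx ho' (hf.injective.ne_iff.1 (by order)))).2
    hop hI.lt hqo'

theorem adj_left_end_mid (hI : IsInnermostEdgeOver G f p q m) (hf : IsBookEmbedding G f)
    (hS : G.square.IsClique (S : Set V)) (hx : x ∈ S) (hpx : f p < f x) (hxm : f x < f m)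
    (hright : 3 ≤ #{s ∈ S | f m < f s}) (hle : ∀ o ∈ S, f o ≤ f q) (hp : p ∈ S) :
    G.Adj p m := by
  by_contra hpm
  -- then `(m, q) ∩ S` consists of common neighbours of `m` and `q`, too few to fill the right
  have hone : #{s ∈ S | f m < f s ∧ f s < f q} ≤ 1 :=
    hf.card_le_one_of_forall_adj fun y hy => by
      obtain ⟨hy, hmy, hyq⟩ := mem_filter.1 hy
      exact ⟨hmy, hyq,
        (hI.adj_of_left_of_right hf hpx hxm hmy hyq
          (hS hx hy (hf.injective.ne_iff.1 (by order)))).2,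
        hI.adj_right_end_of_not_adj hf hpm hmy hyq
          (hS hp hy (hf.injective.ne_iff.1 (hI.lt_mid.trans hmy).ne))⟩
  have h0 : #{s ∈ S | f q < f s} = 0 :=
    card_eq_zero.2 <| filter_eq_empty_iff.2 fun s hs => (hle s hs).not_gt
  have := card_filter_gt_le hf.injective S m q
  omega

theorem forall_adj_mid (hI : IsInnermostEdgeOver G f p q m) (hf : IsBookEmbedding G f)
    (hS : G.square.IsClique (S : Set V)) (hx : x ∈ S) (hpx : f p < f x) (hxm : f x < f m)
    (hy : y ∈ S) (hmy : f m < f y) (hyq : f y < f q) (hleft : 3 ≤ #{s ∈ S | f s < f m})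
    (hright : 3 ≤ #{s ∈ S | f m < f s}) : ∀ s ∈ S, s ≠ m → G.Adj m s := by
  have hge : ∀ o ∈ S, f p ≤ f o := fun o ho =>
    hI.left_end_le hf hS hx hpx hxm hy hmy hyq hright ho
  have hle : ∀ o ∈ S, f o ≤ f q := fun o ho =>
    hI.dual.left_end_le hf.dual hS hy hyq hmy hx hxm hpx hleft ho
  intro s hs hsm
  rcases position_cases hf.injective p m q s with h | rfl | h | rfl | h | rfl | h
  · exact absurd (hge s hs) h.not_ge
  · exact (hI.adj_left_end_mid hf hS hx hpx hxm hright hle hs).symm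
  · exact (hI.adj_of_left_of_right hf h.1 h.2 hmy hyq
      (hS hs hy (hf.injective.ne_iff.1 (by order)))).1.symm
  · exact absurd rfl hsm
  · exact (hI.adj_of_left_of_right hf hpx hxm h.1 h.2
      (hS hx hs (hf.injective.ne_iff.1 (by order)))).2
  · exact (hI.dual.adj_left_end_mid hf.dual hS hy hyq hmy hleft hge hs).symm
  · exact absurd (hle s hs) h.not_ge

theorem forall_adj_left_end (hI : IsInnermostEdgeOver G f p q m) (hf : IsBookEmbedding G f)
    (hS : G.square.IsClique (S : Set V)) (hx : x ∈ S) (hpx : f p < f x) (hxm : f x < f m)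
    (hR : ∀ s ∈ S, ¬(f m < f s ∧ f s < f q)) (hm : m ∈ S)
    (hright : 3 ≤ #{s ∈ S | f m < f s}) :
    ∀ s ∈ S, s ≠ p → G.Adj p s := by
  have hmq := hI.mid_lt
  obtain ⟨o₁, ho₁, o₂, ho₂, hqo₁, ho⟩ :=
    exists_two_gt_of_none_between hf.injective hR hright
  have hO : ∀ o ∈ S, (f o < f p ∨ f q < f o) → G.Adj p o := fun o ho hout =>
    (hI.adj_of_left_of_outside hf hpx hxm hout
      (hS hx ho (hf.injective.ne_iff.1 (by rcases hout with h | h <;> order)))).2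
  have hpm : G.Adj p m := by
    rcases hf.square_adj_across hI.adj hI.lt_mid hI.mid_lt (Or.inr (hqo₁.trans ho))
      (hS hm ho₂ (hf.injective.ne_iff.1 (by order))) with h | h
    · exact h.1.symm
    · exact (hf.not_cross (hO o₁ ho₁ (Or.inr hqo₁)) h.2 hI.lt hqo₁ ho).elim
  refine hI.forall_adj_left_end_of_regions hf.injective (fun s hs hps hsm => ?_) hR hO hpm
  exact (hI.adj_of_left_of_outside hf hps hsm (Or.inr hqo₁)
    (hS hs ho₁ (hf.injective.ne_iff.1 (by order)))).1.symm

theorem exists_hub_of_forall_adj_left_end (hI : IsInnermostEdgeOver G f p q m)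
    (hf : IsBookEmbedding G f) (hL : ∀ s ∈ S, ¬(f p < f s ∧ f s < f m))
    (hR : ∀ s ∈ S, ¬(f m < f s ∧ f s < f q))
    (hmo : ∀ o ∈ S, (f o < f p ∨ f q < f o) →
      (G.Adj m p ∧ G.Adj p o) ∨ (G.Adj m q ∧ G.Adj q o))
    {l : V} (hl : l ∈ S) (hlp : f l < f p)
    (hp : ∀ o ∈ S, (f o < f p ∨ f q < f o) → G.Adj p o) :
    ∃ h, ∀ s ∈ S, s ≠ h → G.Adj h s := by
  by_cases hpm : G.Adj p m
  · exact ⟨p, hI.forall_adj_left_end_of_regions hf.injective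
      (fun s hs h₁ h₂ => absurd ⟨h₁, h₂⟩ (hL s hs)) hR hp hpm⟩
  have hq : ∀ o ∈ S, (f o < f p ∨ f q < f o) → G.Adj m q ∧ G.Adj q o := fun o ho hout =>
    (hmo o ho hout).resolve_left fun h => hpm h.1.symm
  exact ⟨q, hI.dual.forall_adj_left_end_of_regions hf.dual.injective
    (fun s hs h₁ h₂ => absurd ⟨h₂, h₁⟩ (hR s hs)) (fun s hs h => hL s hs h.symm)
    (fun o ho hout => (hq o ho hout.symm).2) (hq l hl (Or.inl hlp)).1.symm⟩

theorem exists_hub_of_none_inside (hI : IsInnermostEdgeOver G f p q m)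
    (hf : IsBookEmbedding G f) (hS : G.square.IsClique (S : Set V)) (hm : m ∈ S)
    (hL : ∀ s ∈ S, ¬(f p < f s ∧ f s < f m)) (hR : ∀ s ∈ S, ¬(f m < f s ∧ f s < f q))
    (hleft : 3 ≤ #{s ∈ S | f s < f m}) (hright : 3 ≤ #{s ∈ S | f m < f s}) :
    ∃ h, ∀ s ∈ S, s ≠ h → G.Adj h s := by
  have hpm := hI.lt_mid
  have hmq := hI.mid_lt
  obtain ⟨r₁, hr₁, r₂, hr₂, hqr₁, hr⟩ :=
    exists_two_gt_of_none_between hf.injective hR hright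
  obtain ⟨l₂, hl₂, l₁, hl₁, hl₂p, hl⟩ : ∃ l₂ ∈ S, ∃ l₁ ∈ S, f l₂ < f p ∧ f l₁ < f l₂ :=
    exists_two_gt_of_none_between hf.dual.injective (fun s hs h => hL s hs h.symm) hleft
  have hmo : ∀ o ∈ S, (f o < f p ∨ f q < f o) →
      (G.Adj m p ∧ G.Adj p o) ∨ (G.Adj m q ∧ G.Adj q o) := fun o ho hout =>
    hf.square_adj_across hI.adj hI.lt_mid hI.mid_lt hout
      (hS hm ho (hf.injective.ne_iff.1 (by rcases hout with h | h <;> order)))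
  rcases hf.forall_adj_or_forall_adj hS hI.lt
    (fun o ho hout => (hmo o ho hout).imp And.right And.right)
    hl₁ hl₂ hl hl₂p hr₁ hr₂ hqr₁ hr with hp | hq
  · exact hI.exists_hub_of_forall_adj_left_end hf hL hR hmo hl₁ (hl.trans hl₂p) hp
  · exact hI.dual.exists_hub_of_forall_adj_left_end hf.dual (fun s hs h => hR s hs h.symm)
      (fun s hs h => hL s hs h.symm) (fun o ho hout => (hmo o ho hout.symm).symm) hr₁ hqr₁
      (fun o ho hout => hq o ho hout.symm)

theorem exists_hub (hI : IsInnermostEdgeOver G f p q m) (hf : IsBookEmbedding G f)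
    (hS : G.square.IsClique (S : Set V)) (hm : m ∈ S) (hleft : 3 ≤ #{s ∈ S | f s < f m})
    (hright : 3 ≤ #{s ∈ S | f m < f s}) : ∃ h, ∀ s ∈ S, s ≠ h → G.Adj h s := by
  by_cases hL : ∃ x ∈ S, f p < f x ∧ f x < f m <;>
    by_cases hR : ∃ y ∈ S, f m < f y ∧ f y < f q
  · obtain ⟨x, hx, hpx, hxm⟩ := hL
    obtain ⟨y, hy, hmy, hyq⟩ := hR
    exact ⟨m, hI.forall_adj_mid hf hS hx hpx hxm hy hmy hyq hleft hright⟩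
  · obtain ⟨x, hx, hpx, hxm⟩ := hL
    exact ⟨p, hI.forall_adj_left_end hf hS hx hpx hxm (fun s hs h => hR ⟨s, hs, h⟩) hm
      hright⟩
  · obtain ⟨y, hy, hmy, hyq⟩ := hR
    exact ⟨q, hI.dual.forall_adj_left_end hf.dual hS hy hyq hmy
      (fun s hs h => hL ⟨s, hs, h.2, h.1⟩) hm hleft⟩
  · exact hI.exists_hub_of_none_inside hf hS hm (fun s hs h => hL ⟨s, hs, h⟩)
      (fun s hs h => hR ⟨s, hs, h⟩) hleft hright

end IsInnermostEdgeOver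

theorem IsBookEmbedding.exists_hub [Finite V] (hf : IsBookEmbedding G f) {S : Finset V}
    (hS : G.square.IsClique (S : Set V)) (hcard : 7 ≤ #S) :
    ∃ h, ∀ s ∈ S, s ≠ h → G.Adj h s := by
  obtain ⟨m, hm, hleft, hright⟩ := exists_median hf.injective 3 S hcard
  by_cases hover : ∃ a b, G.Adj a b ∧ f a < f m ∧ f m < f b
  · obtain ⟨p, q, hI⟩ := hf.exists_isInnermostEdgeOver hover
    exact hI.exists_hub hf hS hm hleft hright
  · exact ⟨m, forall_adj_of_not_exists_adj_over hf.injective hS hover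
      (filter_nonempty_iff.1 (card_pos.1 (by omega)))
      (filter_nonempty_iff.1 (card_pos.1 (by omega)))⟩

theorem SimpleGraph.deg_eq_maxDeg_and_eq_insert_neighborSet [Fintype V] {S : Finset V} {h : V}
    (hcard : #S = G.maxDeg + 1) (hh : ∀ s ∈ S, s ≠ h → G.Adj h s) :
    G.deg h = G.maxDeg ∧ (S : Set V) = insert h (G.neighborSet h) := by
  have hdeg : G.deg h ≤ G.maxDeg := le_sup (f := G.deg) (mem_univ h)
  have hins := Set.ncard_insert_le h (G.neighborSet h)
  have hS : (S : Set V) = insert h (G.neighborSet h) :=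
    Set.eq_of_subset_of_ncard_le (fun s hs => or_iff_not_imp_left.2 (hh s hs))
      (by rw [Set.ncard_coe_finset]; unfold deg at hdeg; omega)
  refine ⟨le_antisymm hdeg ?_, hS⟩
  have := congrArg Set.ncard hS
  rw [Set.ncard_coe_finset] at this
  unfold deg
  omega

end

/-- For a finite outerplanar graph `G` with maximum degree
`Δ ≥ 6`, every clique of `G²` with `Δ + 1` vertices is the closed neighborhood of
some vertex of degree `Δ`. -/
theorem stmt15 {V : Type*} [Fintype V] (G : SimpleGraph V)
    (hout : G.IsOuterplanar) (hΔ : 6 ≤ G.maxDeg)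
    (S : Finset V) (hcard : S.card = G.maxDeg + 1)
    (hclique : G.square.IsClique (S : Set V)) :
    ∃ v : V, G.deg v = G.maxDeg ∧ (S : Set V) = insert v (G.neighborSet v) := by
  obtain ⟨f, hinj, hnc⟩ := hout
  have hf : IsBookEmbedding G f :=
    ⟨hinj, fun a b c d hab hcd h₁ h₂ h₃ => hnc a b c d hab hcd ⟨h₁, h₂, h₃⟩⟩
  obtain ⟨h, hh⟩ := hf.exists_hub hclique (by omega)
  exact ⟨h, G.deg_eq_maxDeg_and_eq_insert_neighborSet hcard hh⟩
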